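/- Let f ∈ ℝ[X₁,…,Xₙ] be a polynomial with f(0) = 0 and ∇f(0) = 0. Suppose 𝒭 > 0 satisfies Condition 1, 0 < R < 𝒭, and R is an isolation radius of 0 (i.e., Crit_ℝ(f) ∩ B_R = {0}). Then Γ_ℝ(f) ∩ f⁻¹(0) ∩ B_R = {0}; consequently R is a faithful radius of 0. -/

import Mathlib

open MvPolynomial Metric Set

noncomputable section

/-- The gradient of a real polynomial `f`, as a map on `ℝⁿ`. -/
def grad {n : ℕ} (f : MvPolynomial (Fin n) ℝ) (x : EuclideanSpace ℝ (Fin n)) :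
    EuclideanSpace ℝ (Fin n) :=
  WithLp.toLp 2 (fun i => eval (fun j => x j) (pderiv i f))

/-- Evaluation of a polynomial as a function on `ℝⁿ`. -/
def evalP {n : ℕ} (f : MvPolynomial (Fin n) ℝ) (x : EuclideanSpace ℝ (Fin n)) : ℝ :=
  eval (fun j => x j) f

/-- The tangency variety `Γ_ℝ(f) = {x | ∃ λ, ∇f(x) = λ x}`. -/
def Gamma {n : ℕ} (f : MvPolynomial (Fin n) ℝ) : Set (EuclideanSpace ℝ (Fin n)) :=
  {x | ∃ l : ℝ, grad f x = l • x}

/-- The set of real critical points `Crit_ℝ(f) = {x | ∇f(x) = 0}`. -/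
def Crit {n : ℕ} (f : MvPolynomial (Fin n) ℝ) : Set (EuclideanSpace ℝ (Fin n)) :=
  {x | grad f x = 0}

/-- Condition 1 for the radius `sR`: for every nonzero `u ∈ Γ_ℝ(f)` with `‖u‖ < sR`,
there exist a neighborhood `O ⊆ B_sR` of `u`, reals `a < t̄ < b` and a differentiable
map `φ : (a,b) → ℝⁿ` with `φ((a,b)) = Γ_ℝ(f) ∩ O`, `φ(t̄) = u`, and the derivative of
`t ↦ Σᵢ φᵢ(t)² = ‖φ(t)‖²` at `t̄` nonzero. -/
def Cond1 {n : ℕ} (f : MvPolynomial (Fin n) ℝ) (sR : ℝ) : Prop :=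
  ∀ u ∈ Gamma f, u ≠ 0 → ‖u‖ < sR →
    ∃ (O : Set (EuclideanSpace ℝ (Fin n))) (a b tb : ℝ)
      (φ : ℝ → EuclideanSpace ℝ (Fin n)),
      O ∈ nhds u ∧ O ⊆ closedBall (0 : EuclideanSpace ℝ (Fin n)) sR ∧
      a < tb ∧ tb < b ∧
      (∀ t ∈ Ioo a b, DifferentiableAt ℝ φ t) ∧
      φ '' Ioo a b = Gamma f ∩ O ∧ φ tb = u ∧
      deriv (fun t => ‖φ t‖ ^ 2) tb ≠ 0

/-- `R` is a faithful radius of the critical point `0` of `f`. -/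
def IsFaithfulRadius {n : ℕ} (f : MvPolynomial (Fin n) ℝ) (R : ℝ) : Prop :=
  0 < R ∧ Crit f ∩ closedBall (0 : EuclideanSpace ℝ (Fin n)) R = {0} ∧
    IsConnected (Gamma f ∩ closedBall (0 : EuclideanSpace ℝ (Fin n)) R) ∧
    Gamma f ∩ {x | evalP f x = 0} ∩ closedBall (0 : EuclideanSpace ℝ (Fin n)) R = {0}

/-!
On `Γ_ℝ(f)` the gradient is `λ x`, so along a curve `φ` in `Γ_ℝ(f)` we have
`(f ∘ φ)' = λ ⟪φ, φ'⟫ = (λ / 2) (‖φ‖²)'`. By Condition 1 every nonzero `u ∈ Γ_ℝ(f) ∩ B_R` therefore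
lies on an arc of `Γ_ℝ(f) \ {0}` along which `‖·‖` drops below `‖u‖`, and along which `f` drops
below `f u` when `λ > 0`.

Minimizing `‖·‖` over a connected component of the compact set `Γ_ℝ(f) ∩ B_R` thus gives `0`, so
every component contains `0`. For the zero set, take `x ≠ 0` in `Γ_ℝ(f) ∩ B_R` and its component
`K` in `(Γ_ℝ(f) ∩ B_R) \ {0}`. Since `R` is an isolation radius, `λ` does not vanish on `K`, so it
keeps the sign of `λ(x)`, say positive (otherwise replace `f` by `-f`). Then `f` has no minimum on
`K`, so its minimum over `closure K` is attained at `0`, and `f x > f 0 = 0`.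
-/

open RealInnerProductSpace Filter Topology

section Curve

variable {E : Type*} [NormedAddCommGroup E] [InnerProductSpace ℝ E]

theorem HasDerivAt.eventually_nhdsGT_lt {g : ℝ → ℝ} {c t₀ : ℝ} (hg : HasDerivAt g c t₀)
    (hc : c < 0) : ∀ᶠ t in 𝓝[>] t₀, g t < g t₀ := by
  have hslope := (hasDerivAt_iff_tendsto_slope.mp hg).mono_left (nhdsGT_le_nhdsNE t₀)
  filter_upwards [hslope.eventually (eventually_lt_nhds hc), self_mem_nhdsWithin]
    with t hneg (ht : t₀ < t)
  rw [slope_def_field, div_neg_iff] at hneg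
  rcases hneg with ⟨-, hden⟩ | ⟨hnum, -⟩
  · linarith
  · linarith

theorem exists_descent_arc_of_inner_neg {γ : ℝ → E} {p : E} {t₀ μ : ℝ} {U : Set ℝ}
    {F : E → ℝ} (hU : U ∈ 𝓝 t₀) (hγU : ContinuousOn γ U) (hγ : HasDerivAt γ p t₀)
    (hγ0 : γ t₀ ≠ 0) (hF : HasDerivAt (F ∘ γ) (μ * ⟪γ t₀, p⟫) t₀) (hp : ⟪γ t₀, p⟫ < 0) :
    ∃ S ⊆ γ '' U, IsPreconnected S ∧ γ t₀ ∈ S ∧ (∀ x ∈ S, x ≠ 0 ∧ ‖x‖ ≤ ‖γ t₀‖) ∧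
      ∃ v ∈ S, ‖v‖ < ‖γ t₀‖ ∧ (0 < μ → F v < F (γ t₀)) := by
  have hnear : ∀ᶠ t in 𝓝 t₀, t ∈ U ∧ γ t ≠ 0 :=
    (show ∀ᶠ t in 𝓝 t₀, t ∈ U from hU).and <|
      (hγU.continuousAt hU).eventually (isOpen_ne.mem_nhds hγ0)
  have hnorm : ∀ᶠ t in 𝓝[>] t₀, ‖γ t‖ < ‖γ t₀‖ := by
    filter_upwards [(hγ.norm_sq.eventually_nhdsGT_lt (by linarith))] with t ht
    exact (pow_lt_pow_iff_left₀ (norm_nonneg _) (norm_nonneg _) two_ne_zero).mp ht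
  have hdecr : ∀ᶠ t in 𝓝[>] t₀, 0 < μ → F (γ t) < F (γ t₀) := by
    by_cases hμ : 0 < μ
    · filter_upwards [hF.eventually_nhdsGT_lt (mul_neg_of_pos_of_neg hμ hp)] with t ht
      exact fun _ => ht
    · exact Eventually.of_forall fun _ h => absurd h hμ
  obtain ⟨t₂, ht₀₂ : t₀ < t₂, hgood⟩ := mem_nhdsGT_iff_exists_Ioo_subset.mp
    ((hnear.filter_mono nhdsWithin_le_nhds).and (hnorm.and hdecr))
  obtain ⟨t₁, ht₀₁, ht₁₂⟩ := exists_between ht₀₂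
  have hIcc : ∀ t ∈ Icc t₀ t₁, (t ∈ U ∧ γ t ≠ 0) ∧ ‖γ t‖ ≤ ‖γ t₀‖ := by
    rintro t ⟨ht₀, ht₁⟩
    rcases ht₀.eq_or_lt with rfl | ht₀
    · exact ⟨hnear.self_of_nhds, le_rfl⟩
    · have ht := hgood ⟨ht₀, ht₁.trans_lt ht₁₂⟩
      exact ⟨ht.1, ht.2.1.le⟩
  have ht₁ : t₁ ∈ Ioo t₀ t₂ := ⟨ht₀₁, ht₁₂⟩
  refine ⟨γ '' Icc t₀ t₁, image_mono fun t ht => (hIcc t ht).1.1,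
    isPreconnected_Icc.image γ (hγU.mono fun t ht => (hIcc t ht).1.1),
    mem_image_of_mem γ (left_mem_Icc.mpr ht₁.1.le), ?_,
    γ t₁, mem_image_of_mem γ (right_mem_Icc.mpr ht₁.1.le), (hgood ht₁).2⟩
  rintro _ ⟨t, ht, rfl⟩
  exact ⟨(hIcc t ht).1.2, (hIcc t ht).2⟩

theorem exists_descent_arc {γ : ℝ → E} {p : E} {t₀ μ : ℝ} {U : Set ℝ} {F : E → ℝ}
    (hU : U ∈ 𝓝 t₀) (hγU : ContinuousOn γ U) (hγ : HasDerivAt γ p t₀) (hγ0 : γ t₀ ≠ 0)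
    (hF : HasDerivAt (F ∘ γ) (μ * ⟪γ t₀, p⟫) t₀) (hp : ⟪γ t₀, p⟫ ≠ 0) :
    ∃ S ⊆ γ '' U, IsPreconnected S ∧ γ t₀ ∈ S ∧ (∀ x ∈ S, x ≠ 0 ∧ ‖x‖ ≤ ‖γ t₀‖) ∧
      ∃ v ∈ S, ‖v‖ < ‖γ t₀‖ ∧ (0 < μ → F v < F (γ t₀)) := by
  rcases hp.lt_or_gt with hneg | hpos
  · exact exists_descent_arc_of_inner_neg hU hγU hγ hγ0 hF hneg
  have hU' : Neg.neg ⁻¹' U ∈ 𝓝 (-t₀) :=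
    continuous_neg.continuousAt.preimage_mem_nhds (by rwa [neg_neg])
  have hγ' : HasDerivAt (γ ∘ Neg.neg) (-p) (-t₀) := by
    simpa using (show HasDerivAt γ p (- -t₀) by rwa [neg_neg]).scomp (-t₀) (hasDerivAt_neg (-t₀))
  have hF' : HasDerivAt (F ∘ (γ ∘ Neg.neg)) (μ * ⟪(γ ∘ Neg.neg) (-t₀), -p⟫) (-t₀) := by
    have := (show HasDerivAt (F ∘ γ) (μ * ⟪γ t₀, p⟫) (- -t₀) by rwa [neg_neg]).comp (-t₀)
      (hasDerivAt_neg (-t₀))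
    simp only [Function.comp_apply, neg_neg, inner_neg_right, mul_neg, mul_one] at this ⊢
    exact this
  obtain ⟨S, hSU, hS⟩ := exists_descent_arc_of_inner_neg hU'
    (hγU.comp continuous_neg.continuousOn (mapsTo_preimage _ _)) hγ' (by simpa) hF'
    (by simpa using hpos)
  simp only [Function.comp_apply, neg_neg] at hS
  refine ⟨S, hSU.trans ?_, hS⟩
  rintro _ ⟨t, ht, rfl⟩
  exact ⟨-t, ht, rfl⟩

end Curve

section Tangency

variable {n : ℕ}

theorem hasFDerivAt_evalP (f : MvPolynomial (Fin n) ℝ) (x : EuclideanSpace ℝ (Fin n)) :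
    HasFDerivAt (evalP f) (innerSL ℝ (grad f x)) x := by
  induction f using MvPolynomial.induction_on with
  | C a =>
    have hgrad : grad (C a : MvPolynomial (Fin n) ℝ) x = 0 := by ext i; simp [grad]
    have heval : evalP (C a : MvPolynomial (Fin n) ℝ) = fun _ => a := by funext y; simp [evalP]
    rw [hgrad, heval, map_zero]
    exact hasFDerivAt_const a x
  | add p q hp hq =>
    have hgrad : grad (p + q) x = grad p x + grad q x := by ext i; simp [grad]
    have heval : evalP (p + q) = fun y => evalP p y + evalP q y := by funext y; simp [evalP]
    rw [hgrad, heval, map_add]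
    exact hp.add hq
  | mul_X p i hp =>
    have heval : evalP (p * X i) = fun y : EuclideanSpace ℝ (Fin n) => evalP p y * y i := by
      funext y; simp [evalP]
    have hgrad : grad (p * X i) x = x i • grad p x + evalP p x • EuclideanSpace.single i 1 := by
      ext j
      rcases eq_or_ne i j with rfl | hij
      · simp [grad, evalP, add_comm]
      · simp [grad, evalP, hij, hij.symm, mul_comm]
    rw [heval]
    refine (hp.mul' (EuclideanSpace.proj i).hasFDerivAt).congr_fderiv ?_
    ext v
    rw [innerSL_apply_apply, hgrad, inner_add_left, real_inner_smul_left, real_inner_smul_left,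
      EuclideanSpace.inner_single_left]
    simp [add_comm]

theorem continuous_evalP (f : MvPolynomial (Fin n) ℝ) : Continuous (evalP f) :=
  continuous_iff_continuousAt.mpr fun x => (hasFDerivAt_evalP f x).continuousAt

theorem continuous_grad (f : MvPolynomial (Fin n) ℝ) : Continuous (grad f) :=
  (PiLp.continuous_toLp 2 _).comp (continuous_pi fun i => continuous_evalP (pderiv i f))

theorem inner_grad_self_eq {f : MvPolynomial (Fin n) ℝ} {x : EuclideanSpace ℝ (Fin n)} {l : ℝ}
    (hx : grad f x = l • x) : ⟪grad f x, x⟫ = l * ‖x‖ ^ 2 := by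
  rw [hx, real_inner_smul_left, real_inner_self_eq_norm_sq]

theorem isClosed_Gamma {f : MvPolynomial (Fin n) ℝ} (hgrad : grad f 0 = 0) :
    IsClosed (Gamma f) := by
  -- away from `0` the multiplier is `⟪∇f x, x⟫ / ‖x‖²`
  have hGamma : Gamma f = {x | (‖x‖ ^ 2 : ℝ) • grad f x = ⟪grad f x, x⟫ • x} := by
    ext x
    constructor
    · rintro ⟨l, hl⟩
      show _ = _
      rw [inner_grad_self_eq hl, hl, smul_smul, mul_comm]
    · intro (hx : (‖x‖ ^ 2 : ℝ) • grad f x = ⟪grad f x, x⟫ • x)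
      rcases eq_or_ne x 0 with rfl | hx0
      · exact ⟨0, by rw [hgrad, zero_smul]⟩
      · have hn : (‖x‖ ^ 2 : ℝ) ≠ 0 := by positivity
        refine ⟨⟪grad f x, x⟫ / ‖x‖ ^ 2, ?_⟩
        rw [div_eq_inv_mul, ← smul_smul, ← hx, smul_smul, inv_mul_cancel₀ hn, one_smul]
  rw [hGamma]
  exact isClosed_eq ((continuous_norm.pow 2).smul (continuous_grad f))
    (((continuous_grad f).inner (𝕜 := ℝ) continuous_id).smul continuous_id)

theorem grad_neg (f : MvPolynomial (Fin n) ℝ) (x : EuclideanSpace ℝ (Fin n)) :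
    grad (-f) x = -grad f x := by
  ext i
  simp [grad]

theorem evalP_neg (f : MvPolynomial (Fin n) ℝ) (x : EuclideanSpace ℝ (Fin n)) :
    evalP (-f) x = -evalP f x := by
  simp [evalP]

theorem Gamma_neg (f : MvPolynomial (Fin n) ℝ) : Gamma (-f) = Gamma f := by
  ext x
  constructor <;> rintro ⟨l, hl⟩ <;> refine ⟨-l, ?_⟩
  · rw [grad_neg] at hl
    rw [neg_smul, ← hl, neg_neg]
  · rw [grad_neg, hl, neg_smul]

theorem Crit_neg (f : MvPolynomial (Fin n) ℝ) : Crit (-f) = Crit f := by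
  ext x
  simp [Crit, grad_neg]

theorem Cond1.neg {f : MvPolynomial (Fin n) ℝ} {sR : ℝ} (h : Cond1 f sR) : Cond1 (-f) sR := by
  rwa [Cond1, Gamma_neg]

end Tangency

theorem mem_connectedComponentIn_of_mem_closure {X : Type*} [TopologicalSpace X] {F : Set X}
    {x z : X} (hz : z ∈ closure (connectedComponentIn F x)) (hzF : z ∈ F) :
    z ∈ connectedComponentIn F x := by
  have hx : x ∈ F := by
    by_contra hx
    rw [connectedComponentIn_eq_empty hx, closure_empty] at hz
    exact hz
  have hpre : IsPreconnected (insert z (connectedComponentIn F x)) :=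
    isPreconnected_connectedComponentIn.subset_closure (subset_insert _ _)
      (insert_subset hz subset_closure)
  exact hpre.subset_connectedComponentIn (mem_insert_of_mem _ (mem_connectedComponentIn hx))
    (insert_subset hzF (connectedComponentIn_subset _ _)) (mem_insert _ _)

theorem IsPreconnected.forall_pos_of_ne_zero {X : Type*} [TopologicalSpace X] {K : Set X}
    {g : X → ℝ} (hK : IsPreconnected K) (hg : ContinuousOn g K) (hne : ∀ x ∈ K, g x ≠ 0)
    {x₀ : X} (hx₀ : x₀ ∈ K) (hpos : 0 < g x₀) : ∀ x ∈ K, 0 < g x := by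
  intro x hx
  by_contra! hle
  obtain ⟨z, hzK, hz⟩ := hK.intermediate_value hx hx₀ hg ⟨hle, hpos.le⟩
  exact hne z hzK hz

section Descent

variable {n : ℕ} {f : MvPolynomial (Fin n) ℝ} {sR R : ℝ}

theorem Cond1.exists_descent_arc (hcond : Cond1 f sR) {u : EuclideanSpace ℝ (Fin n)}
    (hu : u ∈ Gamma f) (hu0 : u ≠ 0) (hun : ‖u‖ < sR) :
    ∃ S ⊆ Gamma f, IsPreconnected S ∧ u ∈ S ∧ (∀ x ∈ S, x ≠ 0 ∧ ‖x‖ ≤ ‖u‖) ∧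
      ∃ v ∈ S, ‖v‖ < ‖u‖ ∧ (0 < ⟪grad f u, u⟫ → evalP f v < evalP f u) := by
  obtain ⟨O, a, b, tb, φ, -, -, hatb, htbb, hdiff, himg, rfl, hder⟩ := hcond u hu hu0 hun
  obtain ⟨l, hl⟩ := hu
  have hφ : HasDerivAt φ (deriv φ tb) tb := (hdiff tb ⟨hatb, htbb⟩).hasDerivAt
  have hp : ⟪φ tb, deriv φ tb⟫ ≠ 0 := by
    rw [hφ.norm_sq.deriv] at hder
    exact right_ne_zero_of_mul hder
  have hF : HasDerivAt (evalP f ∘ φ) (l * ⟪φ tb, deriv φ tb⟫) tb := by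
    refine ((hasFDerivAt_evalP f (φ tb)).comp_hasDerivAt tb hφ).congr_deriv ?_
    rw [innerSL_apply_apply, hl, real_inner_smul_left]
  obtain ⟨S, hSU, hpre, hmem, hbound, v, hvS, hvu, hvF⟩ :=
    _root_.exists_descent_arc (Ioo_mem_nhds hatb htbb)
      (fun t ht => (hdiff t ht).continuousAt.continuousWithinAt) hφ hu0 hF hp
  refine ⟨S, hSU.trans (himg ▸ inter_subset_left), hpre, hmem, hbound, v, hvS, hvu, fun h => ?_⟩
  rw [inner_grad_self_eq hl] at h
  exact hvF (pos_of_mul_pos_left h (by positivity))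

theorem Cond1.exists_descent_in_connectedComponentIn (hcond : Cond1 f sR) (hRlt : R < sR)
    {F : Set (EuclideanSpace ℝ (Fin n))}
    (hF : (Gamma f ∩ closedBall 0 R) \ {0} ⊆ F) {y u : EuclideanSpace ℝ (Fin n)}
    (hu : u ∈ connectedComponentIn F y) (huΓ : u ∈ Gamma f) (huR : ‖u‖ ≤ R) (hu0 : u ≠ 0) :
    ∃ v ∈ connectedComponentIn F y, ‖v‖ < ‖u‖ ∧
      (0 < ⟪grad f u, u⟫ → evalP f v < evalP f u) := by
  obtain ⟨S, hSΓ, hpre, huS, hbound, v, hvS, hv⟩ :=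
    hcond.exists_descent_arc huΓ hu0 (huR.trans_lt hRlt)
  have hSF : S ⊆ F := fun x hx =>
    hF ⟨⟨hSΓ hx, mem_closedBall_zero_iff.mpr ((hbound x hx).2.trans huR)⟩, (hbound x hx).1⟩
  rw [connectedComponentIn_eq hu]
  exact ⟨v, hpre.subset_connectedComponentIn huS hSF hvS, hv⟩

theorem zero_mem_connectedComponentIn_Gamma_inter_closedBall (hgrad : grad f 0 = 0)
    (hcond : Cond1 f sR) (hRlt : R < sR) {y : EuclideanSpace ℝ (Fin n)}
    (hy : y ∈ Gamma f ∩ closedBall 0 R) :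
    0 ∈ connectedComponentIn (Gamma f ∩ closedBall 0 R) y := by
  set D := connectedComponentIn (Gamma f ∩ closedBall 0 R) y
  have hDT : D ⊆ Gamma f ∩ closedBall 0 R := connectedComponentIn_subset _ _
  have hD : IsCompact D := by
    refine (isCompact_closedBall 0 R).of_isClosed_subset ?_ (hDT.trans inter_subset_right)
    refine isClosed_of_closure_subset fun z hz => mem_connectedComponentIn_of_mem_closure hz ?_
    exact closure_minimal hDT ((isClosed_Gamma hgrad).inter isClosed_closedBall) hz
  obtain ⟨u, huD, hmin⟩ :=
    hD.exists_isMinOn ⟨y, mem_connectedComponentIn hy⟩ continuous_norm.continuousOn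
  rcases eq_or_ne u 0 with rfl | hu0
  · exact huD
  obtain ⟨huΓ, huR⟩ := hDT huD
  obtain ⟨v, hvD, hvu, -⟩ := hcond.exists_descent_in_connectedComponentIn hRlt sdiff_subset huD
    huΓ (mem_closedBall_zero_iff.mp huR) hu0
  exact absurd (hmin hvD) (not_le.mpr hvu)

theorem isConnected_Gamma_inter_closedBall (hgrad : grad f 0 = 0) (hcond : Cond1 f sR)
    (hR : 0 ≤ R) (hRlt : R < sR) : IsConnected (Gamma f ∩ closedBall 0 R) := by
  have h0 : (0 : EuclideanSpace ℝ (Fin n)) ∈ Gamma f ∩ closedBall 0 R :=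
    ⟨⟨0, by rw [hgrad, zero_smul]⟩, mem_closedBall_self hR⟩
  refine ⟨⟨0, h0⟩, isPreconnected_of_forall 0 fun y hy => ?_⟩
  exact ⟨_, connectedComponentIn_subset _ _,
    zero_mem_connectedComponentIn_Gamma_inter_closedBall hgrad hcond hRlt hy,
    mem_connectedComponentIn hy, isPreconnected_connectedComponentIn⟩

theorem inner_grad_self_ne_zero (hiso : Crit f ∩ closedBall 0 R = {0})
    {x : EuclideanSpace ℝ (Fin n)} (hx : x ∈ Gamma f) (hxR : ‖x‖ ≤ R) (hx0 : x ≠ 0) :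
    ⟪grad f x, x⟫ ≠ 0 := by
  obtain ⟨l, hl⟩ := hx
  have hl0 : l ≠ 0 := by
    rintro rfl
    have hcrit : x ∈ Crit f ∩ closedBall 0 R :=
      ⟨hl.trans (zero_smul _ _), mem_closedBall_zero_iff.mpr hxR⟩
    rw [hiso] at hcrit
    exact hx0 hcrit
  rw [inner_grad_self_eq hl]
  exact mul_ne_zero hl0 (by positivity)

theorem evalP_pos_of_inner_grad_pos (hf0 : evalP f 0 = 0) (hgrad : grad f 0 = 0)
    (hcond : Cond1 f sR) (hRlt : R < sR) (hiso : Crit f ∩ closedBall 0 R = {0})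
    {x : EuclideanSpace ℝ (Fin n)} (hx : x ∈ Gamma f) (hxR : ‖x‖ ≤ R)
    (hpos : 0 < ⟪grad f x, x⟫) : 0 < evalP f x := by
  set K := connectedComponentIn ((Gamma f ∩ closedBall 0 R) \ {0}) x
  have hKsub : K ⊆ (Gamma f ∩ closedBall 0 R) \ {0} := connectedComponentIn_subset _ _
  have hx0 : x ≠ 0 := by
    rintro rfl
    simp at hpos
  have hxK : x ∈ K := mem_connectedComponentIn ⟨⟨hx, mem_closedBall_zero_iff.mpr hxR⟩, hx0⟩
  have hKpos : ∀ u ∈ K, 0 < ⟪grad f u, u⟫ :=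
    isPreconnected_connectedComponentIn.forall_pos_of_ne_zero
      ((continuous_grad f).inner (𝕜 := ℝ) continuous_id).continuousOn
      (fun u hu => inner_grad_self_ne_zero hiso (hKsub hu).1.1
        (mem_closedBall_zero_iff.mp (hKsub hu).1.2) (hKsub hu).2) hxK hpos
  have hdescent : ∀ u ∈ K, ∃ v ∈ K, evalP f v < evalP f u := by
    intro u hu
    obtain ⟨v, hvK, -, hv⟩ := hcond.exists_descent_in_connectedComponentIn hRlt subset_rfl hu
      (hKsub hu).1.1 (mem_closedBall_zero_iff.mp (hKsub hu).1.2) (hKsub hu).2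
    exact ⟨v, hvK, hv (hKpos u hu)⟩
  have hKc : IsCompact (closure K) :=
    (isCompact_closedBall 0 R).of_isClosed_subset isClosed_closure
      (closure_minimal (hKsub.trans (sdiff_subset.trans inter_subset_right)) isClosed_closedBall)
  obtain ⟨v₀, hv₀, hmin⟩ :=
    hKc.exists_isMinOn ⟨x, subset_closure hxK⟩ (continuous_evalP f).continuousOn
  -- `f` has no minimum on `K`, and `closure K \ K` contains no point of `Γ ∩ B_R` but `0`
  have hv₀0 : v₀ = 0 := by
    by_contra hv₀0
    have hT : IsClosed (Gamma f ∩ closedBall 0 R) :=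
      (isClosed_Gamma hgrad).inter isClosed_closedBall
    obtain ⟨v, hvK, hv⟩ := hdescent v₀ <| mem_connectedComponentIn_of_mem_closure hv₀
      ⟨closure_minimal (hKsub.trans sdiff_subset) hT hv₀, hv₀0⟩
    exact absurd (hmin (subset_closure hvK)) (not_le.mpr hv)
  obtain ⟨v, hvK, hv⟩ := hdescent x hxK
  calc 0 = evalP f v₀ := by rw [hv₀0, hf0]
    _ ≤ evalP f v := hmin (subset_closure hvK)
    _ < evalP f x := hv

theorem Gamma_inter_evalP_eq_zero_inter_closedBall (hf0 : evalP f 0 = 0)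
    (hgrad : grad f 0 = 0) (hcond : Cond1 f sR) (hR : 0 ≤ R) (hRlt : R < sR)
    (hiso : Crit f ∩ closedBall 0 R = {0}) :
    Gamma f ∩ {x | evalP f x = 0} ∩ closedBall 0 R = {0} := by
  refine Subset.antisymm ?_ <|
    singleton_subset_iff.mpr ⟨⟨⟨0, by rw [hgrad, zero_smul]⟩, hf0⟩, mem_closedBall_self hR⟩
  rintro x ⟨⟨hx, hfx : evalP f x = 0⟩, hxR⟩
  rw [mem_closedBall_zero_iff] at hxR
  by_contra hx0
  rcases (inner_grad_self_ne_zero hiso hx hxR hx0).lt_or_gt with hneg | hpos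
  · have hfx' := evalP_pos_of_inner_grad_pos (f := -f) (by rw [evalP_neg, hf0, neg_zero])
      (by rw [grad_neg, hgrad, neg_zero]) hcond.neg hRlt (by rwa [Crit_neg]) (by rwa [Gamma_neg])
      hxR (by rwa [grad_neg, inner_neg_left, neg_pos])
    rw [evalP_neg, hfx, neg_zero] at hfx'
    exact hfx'.false
  · exact (evalP_pos_of_inner_grad_pos hf0 hgrad hcond hRlt hiso hx hxR hpos).ne' hfx

end Descent

theorem stmt11_general (n : ℕ) (f : MvPolynomial (Fin n) ℝ)
    (hf0 : evalP f 0 = 0) (hgrad : grad f 0 = 0)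
    (sR : ℝ) (hcond : Cond1 f sR) (R : ℝ) (hR : 0 < R) (hRlt : R < sR)
    (hiso : Crit f ∩ closedBall (0 : EuclideanSpace ℝ (Fin n)) R = {0}) :
    Gamma f ∩ {x | evalP f x = 0} ∩ closedBall (0 : EuclideanSpace ℝ (Fin n)) R = {0} ∧
    IsFaithfulRadius f R := by
  have hzero := Gamma_inter_evalP_eq_zero_inter_closedBall hf0 hgrad hcond hR.le hRlt hiso
  exact ⟨hzero, hR, hiso, isConnected_Gamma_inter_closedBall hgrad hcond hR.le hRlt, hzero⟩

/-- If `sR > 0` satisfies Condition 1, `0 < R < sR`, and `R` is an isolation radius of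
`0`, then `Γ_ℝ(f) ∩ f⁻¹(0) ∩ B_R = {0}`; consequently `R` is a faithful radius of `0`. -/
theorem stmt11 (n : ℕ) (f : MvPolynomial (Fin n) ℝ)
    (hf0 : evalP f 0 = 0) (hgrad : grad f 0 = 0)
    (sR : ℝ) (hsR : 0 < sR) (hcond : Cond1 f sR) (R : ℝ) (hR : 0 < R) (hRlt : R < sR)
    (hiso : Crit f ∩ closedBall (0 : EuclideanSpace ℝ (Fin n)) R = {0}) :
    Gamma f ∩ {x | evalP f x = 0} ∩ closedBall (0 : EuclideanSpace ℝ (Fin n)) R = {0} ∧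
    IsFaithfulRadius f R :=
  stmt11_general n f hf0 hgrad sR hcond R hR hRlt hiso
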